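/- arXiv:quant-ph/0312044 — 3 statements merged into one kernel-verified Lean document; each statement's English description precedes it below -/
import Mathlib

section
/- Let X be a compact Hausdorff space and UX := {K ⊆ X : K nonempty and compact} ordered by reverse inclusion (A ⊑ B iff B ⊆ A). Then (UX, ⊑) is a dcpo in which the supremum of a directed set S is ∩S, its maximal elements are exactly the singletons {x}, and the map x ↦ {x} is a homeomorphism from X onto max(UX) equipped with the relative Scott topology inherited from UX. -/
/-- The upper space UX of a space X: nonempty compact subsets. -/
def UpperSpace (X : Type*) [TopologicalSpace X] :=
  {K : Set X // K.Nonempty ∧ IsCompact K}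

/-- The order of reverse inclusion on UX. -/
def upLE {X : Type*} [TopologicalSpace X] (A B : UpperSpace X) : Prop :=
  B.val ⊆ A.val

/-- `a` is the supremum (least upper bound) of `S` with respect to `le`. -/
def IsLub' {α : Type*} (le : α → α → Prop) (S : Set α) (a : α) : Prop :=
  (∀ s ∈ S, le s a) ∧ ∀ b, (∀ s ∈ S, le s b) → le a b

/-- `U` is Scott open: an upper set inaccessible by directed suprema. -/
def ScottOpen {α : Type*} (le : α → α → Prop) (U : Set α) : Prop :=
  (∀ x ∈ U, ∀ y, le x y → y ∈ U) ∧
  ∀ S : Set α, S.Nonempty → DirectedOn le S →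
    ∀ a, IsLub' le S a → a ∈ U → (S ∩ U).Nonempty

/-- The map x ↦ {x} from X into its upper space. -/
def singletonMap {X : Type*} [TopologicalSpace X] (x : X) : UpperSpace X :=
  ⟨{x}, Set.singleton_nonempty x, isCompact_singleton⟩

/-!
Cantor's intersection theorem makes the intersection of a directed family of nonempty compact
sets nonempty, and under reverse inclusion an intersection is the supremum. For `V` open,
`{K | K ⊆ V}` is Scott open, since a directed family of compact sets whose intersection lies in
`V` already has a member inside `V`; among the maximal elements, the singletons, it cuts out the
image of `V`. Conversely, the compact neighbourhoods of `x` form a directed family with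
intersection `{x}`, so a Scott open set containing `{x}` contains one of them and hence, being
an upper set, every `{y}` with `y` in it.
-/

open Set Topology

namespace UpperSpace

variable {X : Type*} [TopologicalSpace X]

lemma isLub'_of_val_eq_biInter {S : Set (UpperSpace X)} {a : UpperSpace X}
    (ha : a.val = ⋂ A ∈ S, A.val) : IsLub' upLE S a :=
  ⟨fun A hA => show a.val ⊆ A.val from ha ▸ biInter_subset_of_mem hA,
    fun b hb => show b.val ⊆ a.val from ha ▸ subset_iInter₂ hb⟩

lemma exists_val_eq_biInter [T2Space X] {S : Set (UpperSpace X)} (hS : S.Nonempty)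
    (hdir : DirectedOn upLE S) : ∃ z : UpperSpace X, z.val = ⋂ A ∈ S, A.val := by
  obtain ⟨A₀, hA₀⟩ := hS
  have : Nonempty S := ⟨⟨A₀, hA₀⟩⟩
  have hne : (⋂ A ∈ S, A.val).Nonempty := by
    rw [biInter_eq_iInter]
    exact IsCompact.nonempty_iInter_of_directed_nonempty_isCompact_isClosed _
      hdir.directed_val (fun A => A.1.2.1) (fun A => A.1.2.2) (fun A => A.1.2.2.isClosed)
  have hcpt : IsCompact (⋂ A ∈ S, A.val) :=
    A₀.2.2.of_isClosed_subset (isClosed_biInter fun A _ => A.2.2.isClosed)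
      (biInter_subset_of_mem hA₀)
  exact ⟨⟨_, hne, hcpt⟩, rfl⟩

lemma val_eq_biInter_of_isLub' [T2Space X] {S : Set (UpperSpace X)} (hS : S.Nonempty)
    (hdir : DirectedOn upLE S) {a : UpperSpace X} (ha : IsLub' upLE S a) :
    a.val = ⋂ A ∈ S, A.val := by
  obtain ⟨z, hz⟩ := exists_val_eq_biInter hS hdir
  have hzS := isLub'_of_val_eq_biInter hz
  rw [← hz]
  exact Subset.antisymm (hzS.2 a ha.1) (ha.2 z hzS.1)

lemma maximal_iff_val_eq_singleton {A : UpperSpace X} :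
    (∀ B, upLE A B → B = A) ↔ ∃ x : X, A.val = {x} := by
  constructor
  · intro hA
    obtain ⟨x, hx⟩ := A.2.1
    exact ⟨x, congrArg Subtype.val (hA (singletonMap x) (singleton_subset_iff.mpr hx)).symm⟩
  · rintro ⟨x, hx⟩ B hB
    obtain ⟨y, hy⟩ := B.2.1
    have hBx : B.val ⊆ {x} := hx ▸ hB
    exact Subtype.ext <| hx ▸ hBx.antisymm (singleton_subset_iff.mpr (hBx hy ▸ hy))

lemma singletonMap_injective : Function.Injective (singletonMap (X := X)) :=
  fun _ _ h => singleton_eq_singleton_iff.mp (congrArg Subtype.val h)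

lemma range_singletonMap :
    range (singletonMap (X := X)) = {A : UpperSpace X | ∃ x : X, A.val = {x}} :=
  ext fun _ => ⟨fun ⟨x, hx⟩ => ⟨x, hx ▸ rfl⟩, fun ⟨x, hx⟩ => ⟨x, Subtype.ext hx.symm⟩⟩

lemma image_singletonMap (V : Set X) :
    singletonMap '' V =
      {A : UpperSpace X | A.val ⊆ V} ∩ {A : UpperSpace X | ∀ B, upLE A B → B = A} := by
  ext A
  simp only [mem_image, mem_inter_iff, mem_ofPred_eq, maximal_iff_val_eq_singleton]
  constructor
  · rintro ⟨x, hx, rfl⟩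
    exact ⟨singleton_subset_iff.mpr hx, x, rfl⟩
  · rintro ⟨hAV, x, hx⟩
    exact ⟨x, hAV (hx ▸ rfl), Subtype.ext hx.symm⟩

lemma scottOpen_setOf_val_subset [T2Space X] {V : Set X} (hV : IsOpen V) :
    ScottOpen upLE {A : UpperSpace X | A.val ⊆ V} := by
  refine ⟨fun _ hA _ hAB => hAB.trans hA, fun S hS hdir a ha haV => ?_⟩
  have : Nonempty S := hS.to_subtype
  replace haV : a.val ⊆ V := haV
  rw [val_eq_biInter_of_isLub' hS hdir ha, biInter_eq_iInter] at haV
  obtain ⟨⟨A, hA⟩, hAV⟩ := exists_subset_nhds_of_isCompact hdir.directed_val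
    (fun A => A.1.2.2) fun x hx => hV.mem_nhds (haV hx)
  exact ⟨A, hA, hAV⟩

def compactNhds (x : X) : Set (UpperSpace X) :=
  {K | K.val ∈ 𝓝 x}

lemma compactNhds_nonempty [WeaklyLocallyCompactSpace X] (x : X) :
    (compactNhds x).Nonempty := by
  obtain ⟨K, hKc, hK⟩ := exists_compact_mem_nhds x
  exact ⟨⟨K, ⟨x, mem_of_mem_nhds hK⟩, hKc⟩, hK⟩

lemma directedOn_compactNhds [T2Space X] (x : X) : DirectedOn upLE (compactNhds x) :=
  fun A hA B hB =>
    ⟨⟨A.val ∩ B.val, ⟨x, mem_of_mem_nhds hA, mem_of_mem_nhds hB⟩, A.2.2.inter B.2.2⟩,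
      Filter.inter_mem hA hB, inter_subset_left, inter_subset_right⟩

lemma biInter_compactNhds [LocallyCompactSpace X] [T1Space X] (x : X) :
    ⋂ K ∈ compactNhds x, K.val = {x} := by
  refine (subset_singleton_iff.mpr fun y hy => ?_).antisymm
    (singleton_subset_iff.mpr (mem_iInter₂.mpr fun K hK => mem_of_mem_nhds hK))
  by_contra hyx
  obtain ⟨K, hK, hKy, hKc⟩ :=
    local_compact_nhds (isOpen_compl_singleton.mem_nhds (Ne.symm hyx))
  have hKS : (⟨K, ⟨x, mem_of_mem_nhds hK⟩, hKc⟩ : UpperSpace X) ∈ compactNhds x := hK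
  exact hKy (mem_iInter₂.mp hy _ hKS) rfl

lemma isOpen_preimage_singletonMap [LocallyCompactSpace X] [T2Space X] {U : Set (UpperSpace X)}
    (hU : ScottOpen upLE U) :
    IsOpen (singletonMap ⁻¹' U) := by
  refine isOpen_iff_mem_nhds.mpr fun x hx => ?_
  obtain ⟨K, hK, hKU⟩ := hU.2 _ (compactNhds_nonempty x) (directedOn_compactNhds x) _
    (isLub'_of_val_eq_biInter (biInter_compactNhds x).symm) hx
  exact Filter.mem_of_superset hK fun y hy => hU.1 K hKU _ (singleton_subset_iff.mpr hy)

end UpperSpace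

/-- For X compact Hausdorff, (UX, ⊑) is a dcpo in which directed suprema are
intersections, its maximal elements are the singletons, and x ↦ {x} is a
homeomorphism of X onto max(UX) with the relative Scott topology. -/
theorem upper_space_dcpo_max_homeomorph (X : Type*) [TopologicalSpace X]
    [CompactSpace X] [T2Space X] :
    (∀ A : UpperSpace X, upLE A A) ∧
    (∀ A B : UpperSpace X, upLE A B → upLE B A → A = B) ∧
    (∀ A B C : UpperSpace X, upLE A B → upLE B C → upLE A C) ∧
    (∀ S : Set (UpperSpace X), S.Nonempty → DirectedOn upLE S →
      ∃ z : UpperSpace X, z.val = ⋂ A ∈ S, A.val ∧ IsLub' upLE S z) ∧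
    ({A : UpperSpace X | ∀ B, upLE A B → B = A} =
      {A : UpperSpace X | ∃ x : X, A.val = {x}}) ∧
    (Function.Injective (singletonMap (X := X)) ∧
      Set.range (singletonMap (X := X)) = {A : UpperSpace X | ∀ B, upLE A B → B = A} ∧
      (∀ U : Set (UpperSpace X), ScottOpen upLE U →
        IsOpen (singletonMap (X := X) ⁻¹' U)) ∧
      (∀ V : Set X, IsOpen V →
        ∃ U : Set (UpperSpace X), ScottOpen upLE U ∧
          singletonMap (X := X) '' V =
            U ∩ {A : UpperSpace X | ∀ B, upLE A B → B = A})) := by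
  have hmax : {A : UpperSpace X | ∀ B, upLE A B → B = A} = {A | ∃ x : X, A.val = {x}} :=
    ext fun _ => UpperSpace.maximal_iff_val_eq_singleton
  refine ⟨fun _ => subset_rfl, fun _ _ hAB hBA => Subtype.ext (hBA.antisymm hAB),
    fun _ _ _ hAB hBC => hBC.trans hAB, fun S hS hdir => ?_, hmax,
    UpperSpace.singletonMap_injective, hmax ▸ UpperSpace.range_singletonMap,
    fun _ => UpperSpace.isOpen_preimage_singletonMap,
    fun V hV => ⟨_, UpperSpace.scottOpen_setOf_val_subset hV, UpperSpace.image_singletonMap V⟩⟩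
  obtain ⟨z, hz⟩ := UpperSpace.exists_val_eq_biInter hS hdir
  exact ⟨z, hz, UpperSpace.isLub'_of_val_eq_biInter hz⟩
end

section
/- Let f : ℝ → ℝ be continuous and differentiable at p ∈ ℝ. Then the informatic derivative of the induced map on the interval domain at [p] with respect to the length measurement equals |f′(p)|; concretely: for every ε > 0 there is δ > 0 such that for every compact interval [a,b] with a ≤ p ≤ b and 0 < b − a < δ, one has |(sup f([a,b]) − inf f([a,b]))/(b − a) − |f′(p)|| < ε. -/
/-!
The oscillation `sSup f([a,b]) - sInf f([a,b])` is the diameter of `f([a,b])`. On a short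
interval `[a,b] ∋ p`, differentiability makes `f` uniformly `(ε/3)(b-a)`-close to its tangent
line, which maps `[a,b]` onto a set of diameter `|f'(p)|(b-a)`; and maps that are uniformly
`η`-close have image diameters within `2η` of each other.
-/

open Set Metric Bornology Topology Pointwise

lemma diam_image_const_add_mul (c m : ℝ) (s : Set ℝ) :
    diam ((fun x => c + m * x) '' s) = |m| * diam s := by
  have : (fun x => c + m * x) '' s = c +ᵥ m • s := by
    rw [← image_smul, ← image_vadd, image_image]; rfl
  rw [this, diam_vadd, diam_smul₀, Real.norm_eq_abs]

section UniformlyClose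

variable {α β : Type*} [PseudoMetricSpace β] {f g : α → β} {s : Set α} {η : ℝ}

lemma isBounded_image_of_forall_dist_le (hg : IsBounded (g '' s))
    (hfg : ∀ x ∈ s, dist (f x) (g x) ≤ η) : IsBounded (f '' s) :=
  hg.cthickening.subset <| by
    rintro _ ⟨x, hx, rfl⟩
    exact mem_cthickening_of_dist_le _ _ _ _ (mem_image_of_mem g hx) (hfg x hx)

lemma diam_image_le_diam_image_add (hg : IsBounded (g '' s)) (hη : 0 ≤ η)
    (hfg : ∀ x ∈ s, dist (f x) (g x) ≤ η) : diam (f '' s) ≤ diam (g '' s) + 2 * η := by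
  refine diam_le_of_forall_dist_le (by positivity) ?_
  rintro _ ⟨x, hx, rfl⟩ _ ⟨y, hy, rfl⟩
  calc dist (f x) (f y) ≤ dist (f x) (g x) + dist (g x) (g y) + dist (g y) (f y) :=
        dist_triangle4 _ _ _ _
    _ ≤ η + diam (g '' s) + η := by
        gcongr
        · exact hfg x hx
        · exact dist_le_diam_of_mem hg (mem_image_of_mem g hx) (mem_image_of_mem g hy)
        · exact dist_comm (f y) (g y) ▸ hfg y hy
    _ = diam (g '' s) + 2 * η := by ring

lemma abs_diam_image_sub_diam_image_le (hg : IsBounded (g '' s)) (hη : 0 ≤ η)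
    (hfg : ∀ x ∈ s, dist (f x) (g x) ≤ η) : |diam (f '' s) - diam (g '' s)| ≤ 2 * η := by
  have hgf : ∀ x ∈ s, dist (g x) (f x) ≤ η := fun x hx => dist_comm (f x) (g x) ▸ hfg x hx
  have hf := isBounded_image_of_forall_dist_le hg hfg
  have hf_le := diam_image_le_diam_image_add hg hη hfg
  have hg_le := diam_image_le_diam_image_add hf hη hgf
  exact abs_sub_le_iff.2 ⟨by linarith, by linarith⟩

end UniformlyClose

lemma HasDerivAt.eventually_abs_sub_le {f : ℝ → ℝ} {f' p η : ℝ} (hd : HasDerivAt f f' p)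
    (hη : 0 < η) : ∀ᶠ x in 𝓝 p, |f x - f p - (x - p) * f'| ≤ η * |x - p| := by
  simpa only [Real.norm_eq_abs, smul_eq_mul] using hd.isLittleO.def hη

theorem informatic_derivative_eq_abs_deriv_general (f : ℝ → ℝ)
    (p : ℝ) (f' : ℝ) (hd : HasDerivAt f f' p) :
    ∀ ε > (0 : ℝ), ∃ δ > (0 : ℝ), ∀ a b : ℝ, a ≤ p → p ≤ b →
      0 < b - a → b - a < δ →
      abs ((sSup (f '' Set.Icc a b) - sInf (f '' Set.Icc a b)) / (b - a) - |f'|) < ε := by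
  intro ε hε
  obtain ⟨δ, hδ, hlin⟩ :=
    Metric.eventually_nhds_iff.1 (hd.eventually_abs_sub_le (by positivity : 0 < ε / 3))
  refine ⟨δ, hδ, fun a b hap hpb hab hbδ => ?_⟩
  set g : ℝ → ℝ := fun x => (f p - p * f') + f' * x
  have hfg : ∀ x ∈ Icc a b, dist (f x) (g x) ≤ ε / 3 * (b - a) := fun x hx => by
    have hxp : |x - p| ≤ b - a := abs_sub_le_iff.2 ⟨by linarith [hx.2], by linarith [hx.1]⟩
    calc dist (f x) (g x) = |f x - f p - (x - p) * f'| := by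
          rw [Real.dist_eq]; congr 1; ring
      _ ≤ ε / 3 * |x - p| := hlin ((Real.dist_eq x p).trans_lt (hxp.trans_lt hbδ))
      _ ≤ ε / 3 * (b - a) := by gcongr
  have hg : IsBounded (g '' Icc a b) :=
    (isCompact_Icc.image (by fun_prop)).isBounded
  have hdiam := abs_diam_image_sub_diam_image_le hg (by positivity) hfg
  rw [diam_image_const_add_mul, Real.diam_Icc (sub_pos.1 hab).le, mul_comm |f'|] at hdiam
  rw [← Real.diam_eq (isBounded_image_of_forall_dist_le hg hfg), div_sub' hab.ne', abs_div,
    abs_of_pos hab, div_lt_iff₀ hab]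
  linarith [mul_pos hε hab]

/-- The informatic derivative of the map induced on the interval domain by a
continuous f : ℝ → ℝ, taken at [p] with respect to the length measurement,
equals |f′(p)|. -/
theorem informatic_derivative_eq_abs_deriv (f : ℝ → ℝ) (hf : Continuous f)
    (p : ℝ) (f' : ℝ) (hd : HasDerivAt f f' p) :
    ∀ ε > (0 : ℝ), ∃ δ > (0 : ℝ), ∀ a b : ℝ, a ≤ p → p ≤ b →
      0 < b - a → b - a < δ →
      abs ((sSup (f '' Set.Icc a b) - sInf (f '' Set.Icc a b)) / (b - a) - |f'|) < ε :=
  informatic_derivative_eq_abs_deriv_general f p f' hd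
end

section
/- The Bayesian order is degenerative: for every n ≥ 2 and x, y ∈ Δⁿ with x ⊑ y, if yᵢ = yⱼ > 0 for indices i, j, then xᵢ = xⱼ > 0. -/
/-!
Along the common decreasing arrangement σ, the defining inequalities of `x ⊑ y` say exactly
that the ratio `x/y` is nondecreasing on the (initial) segment where `y > 0`. Where `y` is
constant and positive, `x` is then both nonincreasing and nondecreasing, hence constant. If `x`
vanished at an index where `y > 0`, the ratio would force `x ≤ 0` at every earlier index, and
monotonicity of `x` at every later one, contradicting `∑ x = 1`.
-/

/-- Δⁿ : classical n-states. -/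
def IsClassicalState (n : ℕ) (x : Fin n → ℝ) : Prop :=
  (∀ i, 0 ≤ x i) ∧ ∑ i, x i = 1

/-- The Bayesian order (symmetric characterization). -/
def bayesLE {n : ℕ} (x y : Fin n → ℝ) : Prop :=
  ∃ σ : Equiv.Perm (Fin n),
    Antitone (fun i => x (σ i)) ∧ Antitone (fun i => y (σ i)) ∧
    ∀ i j : Fin n, (i : ℕ) + 1 = (j : ℕ) →
      x (σ i) * y (σ j) ≤ x (σ j) * y (σ i)

open Order

theorem Fin.val_succ_of_not_isMax {n : ℕ} {k : Fin n} (hk : ¬IsMax k) :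
    ((Order.succ k : Fin n) : ℕ) = k + 1 :=
  (Nat.covBy_iff_add_one_eq.1 (Fin.covBy_iff.1 (covBy_succ_of_not_isMax hk))).symm

section CrossRatio

variable {ι α : Type*} [LinearOrder ι] [SuccOrder ι] [IsSuccArchimedean ι]
  [Field α] [LinearOrder α] [IsStrictOrderedRing α] {u v : ι → α}

theorem monotoneOn_div_of_mul_succ_le (hv : Antitone v)
    (hc : ∀ k, ¬IsMax k → u k * v (succ k) ≤ u (succ k) * v k) :
    MonotoneOn (fun k => u k / v k) {k | 0 < v k} :=
  monotoneOn_of_le_succ (isLowerSet_setOfPred.2 fun _ _ h hb => hb.trans_le (hv h)).ordConnected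
    fun k hk hk₀ hk₁ => (div_le_div_iff₀ hk₀ hk₁).2 (hc k hk)

theorem mul_le_mul_of_mul_succ_le (hv : Antitone v)
    (hc : ∀ k, ¬IsMax k → u k * v (succ k) ≤ u (succ k) * v k)
    {a b : ι} (hab : a ≤ b) (hb : 0 < v b) : u a * v b ≤ u b * v a :=
  have ha : 0 < v a := hb.trans_le (hv hab)
  (div_le_div_iff₀ ha hb).1 (monotoneOn_div_of_mul_succ_le hv hc ha hb hab)

theorem eq_of_eq_of_mul_succ_le (hu : Antitone u) (hv : Antitone v)
    (hc : ∀ k, ¬IsMax k → u k * v (succ k) ≤ u (succ k) * v k)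
    {a b : ι} (hab : v a = v b) (hb : 0 < v b) : u a = u b := by
  wlog h : a ≤ b generalizing a b
  · exact (this hab.symm (hab ▸ hb) (le_of_not_ge h)).symm
  have hcross := mul_le_mul_of_mul_succ_le hv hc h hb
  rw [hab] at hcross
  exact le_antisymm (le_of_mul_le_mul_right hcross hb) (hu h)

theorem pos_of_mul_succ_le [Fintype ι] (hu : Antitone u) (hv : Antitone v)
    (hc : ∀ k, ¬IsMax k → u k * v (succ k) ≤ u (succ k) * v k)
    (hsum : 0 < ∑ k, u k) {b : ι} (hb : 0 < v b) : 0 < u b := by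
  by_contra! hub
  have hnonpos : ∀ k, u k ≤ 0 := by
    intro k
    rcases le_total k b with h | h
    · have hvk : 0 ≤ v k := hb.le.trans (hv h)
      have hcross := (mul_le_mul_of_mul_succ_le hv hc h hb).trans
        (mul_nonpos_of_nonpos_of_nonneg hub hvk)
      exact nonpos_of_mul_nonpos_left hcross hb
    · exact (hu h).trans hub
  exact hsum.not_ge (Finset.sum_nonpos fun k _ => hnonpos k)

end CrossRatio

theorem bayesian_order_degenerative_general (n : ℕ)
    (x y : Fin n → ℝ) (hx : IsClassicalState n x)
    (hxy : bayesLE x y) (i j : Fin n) (hij : y i = y j) (hpos : 0 < y i) :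
    x i = x j ∧ 0 < x i := by
  obtain ⟨σ, hxσ, hyσ, hcross⟩ := hxy
  have hc : ∀ k, ¬IsMax k → x (σ k) * y (σ (succ k)) ≤ x (σ (succ k)) * y (σ k) :=
    fun k hk => hcross k _ (Fin.val_succ_of_not_isMax hk).symm
  have hsum : 0 < ∑ k, x (σ k) := by rw [Equiv.sum_comp σ x, hx.2]; exact one_pos
  obtain ⟨i, rfl⟩ := σ.surjective i
  obtain ⟨j, rfl⟩ := σ.surjective j
  exact ⟨eq_of_eq_of_mul_succ_le hxσ hyσ hc hij (hij ▸ hpos),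
    pos_of_mul_succ_le hxσ hyσ hc hsum hpos⟩

/-- The Bayesian order is degenerative: if x ⊑ y and yᵢ = yⱼ > 0 then xᵢ = xⱼ > 0. -/
theorem bayesian_order_degenerative (n : ℕ) (hn : 2 ≤ n)
    (x y : Fin n → ℝ) (hx : IsClassicalState n x) (hy : IsClassicalState n y)
    (hxy : bayesLE x y) (i j : Fin n) (hij : y i = y j) (hpos : 0 < y i) :
    x i = x j ∧ 0 < x i :=
  bayesian_order_degenerative_general n x y hx hxy i j hij hpos
end
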